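/- Fix z, z' ∈ {0,1} with z ≠ z'. Assume Assumptions (1), (2) and (3), and assume the consistency relations V = Z·V₁ + (1−Z)·V₀, M = Z·M₁ + (1−Z)·M₀ and Y = Z·Y_{1,M₁} + (1−Z)·Y_{0,M₀} (where Y_{z,M_z}(ω) = Y_{z,M_z(ω)}(ω)). Fix v ∈ 𝒱 and c ∈ 𝒞 such that P(V_z = v, Z = z, C = c) > 0, such that P(V_{z'} = v', Z = z', C = c) > 0 for every v' ∈ 𝒱, and such that P(M = m', V = v, Z = z, C = c) > 0 and P(M = m', V = v', Z = z', C = c) > 0 for every m' ∈ ℳ and v' ∈ 𝒱. Then E[Y_{z,M_{z'}} | V_z = v, C = c] = Σ_{v' ∈ 𝒱} Σ_{m' ∈ ℳ} E[Y | M = m', V = v, Z = z, C = c] · P(M = m' | V = v', Z = z', C = c) · P(V_{z'} = v' | V_z = v, Z = z, C = c); in particular, every factor except the cross-world conditional probability P(V_{z'} = v' | V_z = v, Z = z, C = c) is a functional of the joint distribution of the observed data (Y, M, V, Z, C). -/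

import Mathlib

open MeasureTheory ProbabilityTheory

/-- Conditional probability `P(A | B) = P(A ∩ B) / P(B)`. -/
noncomputable def cProb {Ω : Type*} [MeasurableSpace Ω] (P : Measure Ω) (A B : Set Ω) : ℝ :=
  (P (A ∩ B)).toReal / (P B).toReal

/-- Conditional expectation `E[X | B] = E[X · 1_B] / P(B)`. -/
noncomputable def cExp {Ω : Type*} [MeasurableSpace Ω] (P : Measure Ω) (X : Ω → ℝ)
    (B : Set Ω) : ℝ :=
  (∫ ω in B, X ω ∂P) / (P B).toReal

/-!
Split the cross-world mean over the value `m` of `M_{z'}`: on `{M_{z'} = m}` the integrand is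
`Y_{z,m}`. By (1), conditioning in addition on `Z = z` does not change the mean, and by (2)
`Y_{z,m}` is independent of `(M_z, M_{z'})` given `V_z = v, Z = z, C = c`, so the term factors
as `E[Y | M = m, V = v, Z = z, C = c] · P(M_{z'} = m | V_z = v, Z = z, C = c)`. This last
probability is split over the value `v'` of `V_{z'}`; (1) moves the joint law of
`(M_{z'}, V_z, V_{z'})` from the arm `z` to the arm `z'`, where (3) removes the dependence on
`V_z`, and consistency turns `M_{z'}, V_{z'}` into the observed `M, V`.
-/

section Fibers

variable {Ω α : Type*}

lemma iUnion_inter_preimage_singleton (T : Set Ω) (W : Ω → α) : ⋃ a, T ∩ W ⁻¹' {a} = T := by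
  rw [← Set.inter_iUnion, ← Set.preimage_iUnion, Set.iUnion_of_singleton, Set.preimage_univ,
    Set.inter_univ]

lemma pairwise_disjoint_inter_preimage_singleton (T : Set Ω) (W : Ω → α) :
    Pairwise (Function.onFun Disjoint fun a => T ∩ W ⁻¹' {a}) := fun _ _ hab =>
  (pairwise_disjoint_fiber W hab).mono Set.inter_subset_right Set.inter_subset_right

variable [MeasurableSpace Ω] {P : Measure Ω} [Fintype α] [MeasurableSpace α]
  [MeasurableSingletonClass α] {W : Ω → α}

lemma toReal_measure_eq_sum_fiber [IsFiniteMeasure P] (hW : Measurable W) {T : Set Ω}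
    (hT : MeasurableSet T) : (P T).toReal = ∑ a, (P (T ∩ W ⁻¹' {a})).toReal := by
  conv_lhs => rw [← iUnion_inter_preimage_singleton T W]
  rw [measure_iUnion (pairwise_disjoint_inter_preimage_singleton T W)
      fun a => hT.inter (hW (measurableSet_singleton a)),
    tsum_fintype, ENNReal.toReal_sum fun a _ => measure_ne_top P _]

lemma toReal_measure_mul_eq_of_fiber [IsFiniteMeasure P] (hW : Measurable W) {S₁ S₂ : Set Ω}
    (hS₁ : MeasurableSet S₁) (hS₂ : MeasurableSet S₂) {k₁ k₂ : ℝ}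
    (h : ∀ a, (P (S₁ ∩ W ⁻¹' {a})).toReal * k₁ = (P (S₂ ∩ W ⁻¹' {a})).toReal * k₂) :
    (P S₁).toReal * k₁ = (P S₂).toReal * k₂ := by
  rw [toReal_measure_eq_sum_fiber hW hS₁, toReal_measure_eq_sum_fiber hW hS₂, Finset.sum_mul,
    Finset.sum_mul]
  exact Finset.sum_congr rfl fun a _ => h a

lemma setIntegral_eq_sum_fiber (hW : Measurable W) {T : Set Ω} (hT : MeasurableSet T)
    {X : Ω → ℝ} (hX : ∀ a, IntegrableOn X (T ∩ W ⁻¹' {a}) P) :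
    ∫ ω in T, X ω ∂P = ∑ a, ∫ ω in T ∩ W ⁻¹' {a}, X ω ∂P := by
  conv_lhs => rw [← iUnion_inter_preimage_singleton T W]
  exact integral_iUnion_fintype (fun a => hT.inter (hW (measurableSet_singleton a)))
    (pairwise_disjoint_inter_preimage_singleton T W) hX

end Fibers

section Integrals

variable {Ω : Type*} [MeasurableSpace Ω] {P : Measure Ω}

lemma setIntegral_eq_mul_of_measure_preimage_inter [IsFiniteMeasure P] {X : Ω → ℝ}
    (hX : Measurable X) {B₁ B₂ : Set Ω} {r : ℝ} (hr : 0 ≤ r)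
    (h : ∀ A, MeasurableSet A → (P (X ⁻¹' A ∩ B₁)).toReal = r * (P (X ⁻¹' A ∩ B₂)).toReal) :
    ∫ ω in B₁, X ω ∂P = r * ∫ ω in B₂, X ω ∂P := by
  have hlaw : (P.restrict B₁).map X = ENNReal.ofReal r • (P.restrict B₂).map X := by
    ext A hA
    rw [Measure.smul_apply, Measure.map_apply hX hA, Measure.map_apply hX hA,
      Measure.restrict_apply (hX hA), Measure.restrict_apply (hX hA), smul_eq_mul,
      ← ENNReal.toReal_eq_toReal_iff' (measure_ne_top _ _)
        (ENNReal.mul_ne_top ENNReal.ofReal_ne_top (measure_ne_top _ _)),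
      ENNReal.toReal_mul, ENNReal.toReal_ofReal hr]
    exact h A hA
  have hpush : ∀ B, ∫ ω in B, X ω ∂P = ∫ x, x ∂(P.restrict B).map X := fun B =>
    (integral_map hX.aemeasurable aestronglyMeasurable_id).symm
  rw [hpush, hpush, hlaw, integral_smul_measure, ENNReal.toReal_ofReal hr, smul_eq_mul]

lemma toReal_measure_inter_mul_of_cProb_eq_mul {A₁ A₂ A₃ B : Set Ω} (hB : (P B).toReal ≠ 0)
    (h : cProb P A₁ B = cProb P A₂ B * cProb P A₃ B) :
    (P (A₁ ∩ B)).toReal * (P B).toReal = (P (A₂ ∩ B)).toReal * (P (A₃ ∩ B)).toReal := by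
  unfold cProb at h
  field_simp at h
  linear_combination h

end Integrals

section Assumptions

variable {Ω 𝒱 ℳ 𝒞 : Type*} [MeasurableSpace Ω]

def IgnorableTreatment (P : Measure Ω) (Z : Ω → Bool) (C : Ω → 𝒞) (V : Bool → Ω → 𝒱)
    (M : Bool → Ω → ℳ) (Y : Bool → ℳ → Ω → ℝ) : Prop :=
  ∀ (za zb : Bool) (m : ℳ), ∀ A : Set ℝ, MeasurableSet A →
    ∀ (m₁ m₂ : ℳ) (v₁ v₂ : 𝒱) (z'' : Bool) (c : 𝒞),
    0 < P {ω | C ω = c} →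
    cProb P {ω | Y za m ω ∈ A ∧ M za ω = m₁ ∧ M zb ω = m₂ ∧ V za ω = v₁ ∧ V zb ω = v₂
        ∧ Z ω = z''} {ω | C ω = c}
      = cProb P {ω | Y za m ω ∈ A ∧ M za ω = m₁ ∧ M zb ω = m₂ ∧ V za ω = v₁ ∧ V zb ω = v₂}
          {ω | C ω = c}
        * cProb P {ω | Z ω = z''} {ω | C ω = c}

def IgnorableMediator (P : Measure Ω) (Z : Ω → Bool) (C : Ω → 𝒞) (V : Bool → Ω → 𝒱)
    (M : Bool → Ω → ℳ) (Y : Bool → ℳ → Ω → ℝ) : Prop :=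
  ∀ (za zb : Bool) (m : ℳ) (v₀ : 𝒱) (c : 𝒞),
    0 < P {ω | V za ω = v₀ ∧ Z ω = za ∧ C ω = c} →
    ∀ A : Set ℝ, MeasurableSet A → ∀ (m₁ m₂ : ℳ),
    cProb P {ω | Y za m ω ∈ A ∧ M za ω = m₁ ∧ M zb ω = m₂}
        {ω | V za ω = v₀ ∧ Z ω = za ∧ C ω = c}
      = cProb P {ω | Y za m ω ∈ A} {ω | V za ω = v₀ ∧ Z ω = za ∧ C ω = c}
        * cProb P {ω | M za ω = m₁ ∧ M zb ω = m₂} {ω | V za ω = v₀ ∧ Z ω = za ∧ C ω = c}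

def CrossWorldIndependent (P : Measure Ω) (Z : Ω → Bool) (C : Ω → 𝒞) (V : Bool → Ω → 𝒱)
    (M : Bool → Ω → ℳ) (z z' : Bool) : Prop :=
  ∀ (v' : 𝒱) (c : 𝒞),
    0 < P {ω | V z' ω = v' ∧ Z ω = z' ∧ C ω = c} →
    ∀ (m' : ℳ) (v : 𝒱),
    cProb P {ω | M z' ω = m' ∧ V z ω = v} {ω | V z' ω = v' ∧ Z ω = z' ∧ C ω = c}
      = cProb P {ω | M z' ω = m'} {ω | V z' ω = v' ∧ Z ω = z' ∧ C ω = c}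
        * cProb P {ω | V z ω = v} {ω | V z' ω = v' ∧ Z ω = z' ∧ C ω = c}

end Assumptions

section Mediator

variable {Ω 𝒱 ℳ 𝒞 : Type*} [MeasurableSpace Ω] [MeasurableSpace 𝒱]
  [MeasurableSingletonClass 𝒱] [Fintype ℳ] [MeasurableSpace ℳ] [MeasurableSingletonClass ℳ]
  [MeasurableSpace 𝒞] [MeasurableSingletonClass 𝒞] {P : Measure Ω} [IsFiniteMeasure P]
  {Z : Ω → Bool} {C : Ω → 𝒞} {V : Bool → Ω → 𝒱} {M : Bool → Ω → ℳ} {Y : Bool → ℳ → Ω → ℝ}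

lemma toReal_measure_mediator_mul_eq (h2 : IgnorableMediator P Z C V M Y) (hZ : Measurable Z)
    (hC : Measurable C) (hV : ∀ zb, Measurable (V zb)) (hM : ∀ zb, Measurable (M zb))
    (hY : ∀ zb m, Measurable (Y zb m)) (za zb : Bool) (m : ℳ) {v₀ : 𝒱} {c : 𝒞}
    (hB : 0 < P {ω | V za ω = v₀ ∧ Z ω = za ∧ C ω = c}) {A : Set ℝ} (hA : MeasurableSet A)
    (m₂ : ℳ) :
    (P {ω | Y za m ω ∈ A ∧ M zb ω = m₂ ∧ V za ω = v₀ ∧ Z ω = za ∧ C ω = c}).toReal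
        * (P {ω | V za ω = v₀ ∧ Z ω = za ∧ C ω = c}).toReal
      = (P {ω | M zb ω = m₂ ∧ V za ω = v₀ ∧ Z ω = za ∧ C ω = c}).toReal
        * (P {ω | Y za m ω ∈ A ∧ V za ω = v₀ ∧ Z ω = za ∧ C ω = c}).toReal := by
  have := hY za m; have := hM za; have := hM zb; have := hV za
  refine toReal_measure_mul_eq_of_fiber (hM za) (by measurability) (by measurability)
    fun m₁ => ?_
  have h := toReal_measure_inter_mul_of_cProb_eq_mul
    (ENNReal.toReal_pos hB.ne' (measure_ne_top P _)).ne' (h2 za zb m v₀ c hB A hA m₁ m₂)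
  convert h.trans (mul_comm _ _) using 4 <;> ext ω <;>
    simp only [Set.mem_inter_iff, Set.mem_ofPred_eq, Set.mem_preimage, Set.mem_singleton_iff] <;>
    tauto

lemma setIntegral_mediator_eq (h2 : IgnorableMediator P Z C V M Y) (hZ : Measurable Z)
    (hC : Measurable C) (hV : ∀ zb, Measurable (V zb)) (hM : ∀ zb, Measurable (M zb))
    (hY : ∀ zb m, Measurable (Y zb m)) (za zb : Bool) (m m₂ : ℳ) {v₀ : 𝒱} {c : 𝒞}
    (hB : 0 < P {ω | V za ω = v₀ ∧ Z ω = za ∧ C ω = c}) :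
    ∫ ω in {ω | M zb ω = m₂ ∧ V za ω = v₀ ∧ Z ω = za ∧ C ω = c}, Y za m ω ∂P
      = (P {ω | M zb ω = m₂ ∧ V za ω = v₀ ∧ Z ω = za ∧ C ω = c}).toReal
          / (P {ω | V za ω = v₀ ∧ Z ω = za ∧ C ω = c}).toReal
        * ∫ ω in {ω | V za ω = v₀ ∧ Z ω = za ∧ C ω = c}, Y za m ω ∂P := by
  refine setIntegral_eq_mul_of_measure_preimage_inter (hY za m) (by positivity) fun A hA => ?_
  rw [div_mul_eq_mul_div, eq_div_iff (ENNReal.toReal_pos hB.ne' (measure_ne_top P _)).ne']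
  exact toReal_measure_mediator_mul_eq h2 hZ hC hV hM hY za zb m hB hA m₂

lemma setIntegral_div_eq_cExp_mul_cProb (h2 : IgnorableMediator P Z C V M Y) (hZ : Measurable Z)
    (hC : Measurable C) (hV : ∀ zb, Measurable (V zb)) (hM : ∀ zb, Measurable (M zb))
    (hY : ∀ zb m, Measurable (Y zb m)) (za zb : Bool) (m : ℳ) {v₀ : 𝒱} {c : 𝒞}
    (hB : 0 < P {ω | V za ω = v₀ ∧ Z ω = za ∧ C ω = c})
    (hD : 0 < P {ω | M za ω = m ∧ V za ω = v₀ ∧ Z ω = za ∧ C ω = c}) :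
    (∫ ω in {ω | M zb ω = m ∧ V za ω = v₀ ∧ Z ω = za ∧ C ω = c}, Y za m ω ∂P)
        / (P {ω | V za ω = v₀ ∧ Z ω = za ∧ C ω = c}).toReal
      = cExp P (Y za m) {ω | M za ω = m ∧ V za ω = v₀ ∧ Z ω = za ∧ C ω = c}
        * cProb P {ω | M zb ω = m} {ω | V za ω = v₀ ∧ Z ω = za ∧ C ω = c} := by
  have hB' := (ENNReal.toReal_pos hB.ne' (measure_ne_top P _)).ne'
  have hD' := (ENNReal.toReal_pos hD.ne' (measure_ne_top P _)).ne'
  rw [cExp, cProb, ← Set.ofPred_and, setIntegral_mediator_eq h2 hZ hC hV hM hY za zb m m hB,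
    setIntegral_mediator_eq h2 hZ hC hV hM hY za za m m hB]
  field_simp

end Mediator

section Treatment

variable {Ω 𝒱 ℳ 𝒞 : Type*} [MeasurableSpace Ω] [Fintype 𝒱] [MeasurableSpace 𝒱]
  [MeasurableSingletonClass 𝒱] [Fintype ℳ] [MeasurableSpace ℳ] [MeasurableSingletonClass ℳ]
  [MeasurableSpace 𝒞] [MeasurableSingletonClass 𝒞] {P : Measure Ω} [IsFiniteMeasure P]
  {Z : Ω → Bool} {C : Ω → 𝒞} {V : Bool → Ω → 𝒱} {M : Bool → Ω → ℳ} {Y : Bool → ℳ → Ω → ℝ}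

lemma toReal_measure_treatment_mul_eq (h1 : IgnorableTreatment P Z C V M Y)
    (hZ : Measurable Z) (hC : Measurable C) (hV : ∀ zb, Measurable (V zb))
    (hM : ∀ zb, Measurable (M zb)) (hY : ∀ zb m, Measurable (Y zb m)) (za zb : Bool) (m : ℳ)
    {A : Set ℝ} (hA : MeasurableSet A) (s₁ s₂ : Set ℳ) (t₁ t₂ : Set 𝒱) (z'' : Bool) {c : 𝒞}
    (hc : 0 < P {ω | C ω = c}) :
    (P {ω | Y za m ω ∈ A ∧ M za ω ∈ s₁ ∧ M zb ω ∈ s₂ ∧ V za ω ∈ t₁ ∧ V zb ω ∈ t₂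
        ∧ Z ω = z'' ∧ C ω = c}).toReal * (P {ω | C ω = c}).toReal
      = (P {ω | Y za m ω ∈ A ∧ M za ω ∈ s₁ ∧ M zb ω ∈ s₂ ∧ V za ω ∈ t₁ ∧ V zb ω ∈ t₂
          ∧ C ω = c}).toReal * (P {ω | Z ω = z'' ∧ C ω = c}).toReal := by
  have := hY za m; have := hM za; have := hM zb; have := hV za; have := hV zb
  refine toReal_measure_mul_eq_of_fiber (W := fun ω => (M za ω, M zb ω, V za ω, V zb ω))
    (by fun_prop) (by measurability) (by measurability) fun ⟨m₁, m₂, v₁, v₂⟩ => ?_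
  by_cases hq : m₁ ∈ s₁ ∧ m₂ ∈ s₂ ∧ v₁ ∈ t₁ ∧ v₂ ∈ t₂
  · have h := toReal_measure_inter_mul_of_cProb_eq_mul
      (ENNReal.toReal_pos hc.ne' (measure_ne_top P _)).ne' (h1 za zb m A hA m₁ m₂ v₁ v₂ z'' c hc)
    convert h using 4 <;> ext ω <;> simp only [Set.mem_inter_iff, Set.mem_ofPred_eq,
      Set.mem_preimage, Set.mem_singleton_iff, Prod.mk.injEq] <;> grind
  · have hempty : ∀ p : Ω → Prop, {ω | Y za m ω ∈ A ∧ M za ω ∈ s₁ ∧ M zb ω ∈ s₂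
        ∧ V za ω ∈ t₁ ∧ V zb ω ∈ t₂ ∧ p ω} ∩ (fun ω => (M za ω, M zb ω, V za ω, V zb ω)) ⁻¹'
          {(m₁, m₂, v₁, v₂)} = ∅ := by
      intro p
      ext ω
      simp only [Set.mem_inter_iff, Set.mem_ofPred_eq, Set.mem_preimage, Set.mem_singleton_iff,
        Prod.mk.injEq, Set.mem_empty_iff_false, iff_false]
      grind
    rw [hempty, hempty]
    simp

lemma setIntegral_div_eq_of_treatment (h1 : IgnorableTreatment P Z C V M Y) (hZ : Measurable Z)
    (hC : Measurable C) (hV : ∀ zb, Measurable (V zb)) (hM : ∀ zb, Measurable (M zb))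
    (hY : ∀ zb m, Measurable (Y zb m)) (za zb : Bool) (m : ℳ) {v₀ : 𝒱} {z'' : Bool} {c : 𝒞}
    (hB : 0 < P {ω | V za ω = v₀ ∧ Z ω = z'' ∧ C ω = c}) :
    (∫ ω in {ω | M zb ω = m ∧ V za ω = v₀ ∧ C ω = c}, Y za m ω ∂P)
        / (P {ω | V za ω = v₀ ∧ C ω = c}).toReal
      = (∫ ω in {ω | M zb ω = m ∧ V za ω = v₀ ∧ Z ω = z'' ∧ C ω = c}, Y za m ω ∂P)
        / (P {ω | V za ω = v₀ ∧ Z ω = z'' ∧ C ω = c}).toReal := by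
  have hpos_of_le {S : Set Ω} (hS : P {ω | V za ω = v₀ ∧ Z ω = z'' ∧ C ω = c} ≤ P S) :
      0 < (P S).toReal :=
    ENNReal.toReal_pos (hB.trans_le hS).ne' (measure_ne_top P _)
  have hcP : 0 < P {ω | C ω = c} := hB.trans_le (measure_mono fun ω hω => hω.2.2)
  have hc := hpos_of_le (S := {ω | C ω = c}) (measure_mono fun ω hω => hω.2.2)
  have hq := hpos_of_le (S := {ω | Z ω = z'' ∧ C ω = c}) (measure_mono fun ω hω => hω.2)
  have hU := hpos_of_le (S := {ω | V za ω = v₀ ∧ C ω = c})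
    (measure_mono fun ω hω => ⟨hω.1, hω.2.2⟩)
  have hint : ∫ ω in {ω | M zb ω = m ∧ V za ω = v₀ ∧ Z ω = z'' ∧ C ω = c}, Y za m ω ∂P
      = (P {ω | Z ω = z'' ∧ C ω = c}).toReal / (P {ω | C ω = c}).toReal
        * ∫ ω in {ω | M zb ω = m ∧ V za ω = v₀ ∧ C ω = c}, Y za m ω ∂P := by
    refine setIntegral_eq_mul_of_measure_preimage_inter (hY za m) (by positivity)
      fun A hA => ?_
    have h := toReal_measure_treatment_mul_eq h1 hZ hC hV hM hY za zb m hA .univ {m} {v₀} .univ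
      z'' hcP
    simp only [Set.mem_univ, Set.mem_singleton_iff, true_and] at h
    rw [div_mul_eq_mul_div, eq_div_iff hc.ne']
    exact h.trans (mul_comm _ _)
  have hmass : (P {ω | V za ω = v₀ ∧ Z ω = z'' ∧ C ω = c}).toReal
      = (P {ω | Z ω = z'' ∧ C ω = c}).toReal / (P {ω | C ω = c}).toReal
        * (P {ω | V za ω = v₀ ∧ C ω = c}).toReal := by
    have h := toReal_measure_treatment_mul_eq h1 hZ hC hV hM hY za zb m .univ .univ .univ {v₀}
      .univ z'' hcP
    simp only [Set.mem_univ, Set.mem_singleton_iff, true_and] at h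
    rw [div_mul_eq_mul_div, eq_div_iff hc.ne']
    exact h.trans (mul_comm _ _)
  rw [hint, hmass]
  field_simp

lemma toReal_measure_crossworld_eq_cProb_mul (h1 : IgnorableTreatment P Z C V M Y)
    {za zb : Bool} (h3 : CrossWorldIndependent P Z C V M za zb) (hZ : Measurable Z)
    (hC : Measurable C) (hV : ∀ zb, Measurable (V zb)) (hM : ∀ zb, Measurable (M zb))
    (hY : ∀ zb m, Measurable (Y zb m)) (m : ℳ) {v v' : 𝒱} {c : 𝒞}
    (hB' : 0 < P {ω | V zb ω = v' ∧ Z ω = zb ∧ C ω = c}) :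
    (P {ω | M zb ω = m ∧ V za ω = v ∧ V zb ω = v' ∧ Z ω = za ∧ C ω = c}).toReal
      = cProb P {ω | M zb ω = m} {ω | V zb ω = v' ∧ Z ω = zb ∧ C ω = c}
        * (P {ω | V za ω = v ∧ V zb ω = v' ∧ Z ω = za ∧ C ω = c}).toReal := by
  have hpos_of_le {S : Set Ω} (hS : P {ω | V zb ω = v' ∧ Z ω = zb ∧ C ω = c} ≤ P S) :
      0 < (P S).toReal :=
    ENNReal.toReal_pos (hB'.trans_le hS).ne' (measure_ne_top P _)
  have hcP : 0 < P {ω | C ω = c} := hB'.trans_le (measure_mono fun ω hω => hω.2.2)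
  have hc := hpos_of_le (S := {ω | C ω = c}) (measure_mono fun ω hω => hω.2.2)
  have hq := hpos_of_le (S := {ω | Z ω = zb ∧ C ω = c}) (measure_mono fun ω hω => hω.2)
  have hB'' := hpos_of_le le_rfl
  have transport : ∀ s : Set ℳ,
      (P {ω | Y za m ω ∈ Set.univ ∧ M za ω ∈ Set.univ ∧ M zb ω ∈ s ∧ V za ω ∈ ({v} : Set 𝒱)
          ∧ V zb ω ∈ ({v'} : Set 𝒱) ∧ Z ω = za ∧ C ω = c}).toReal
          * (P {ω | Z ω = zb ∧ C ω = c}).toReal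
        = (P {ω | Y za m ω ∈ Set.univ ∧ M za ω ∈ Set.univ ∧ M zb ω ∈ s ∧ V za ω ∈ ({v} : Set 𝒱)
          ∧ V zb ω ∈ ({v'} : Set 𝒱) ∧ Z ω = zb ∧ C ω = c}).toReal
          * (P {ω | Z ω = za ∧ C ω = c}).toReal := fun s => by
    have hza := toReal_measure_treatment_mul_eq h1 hZ hC hV hM hY za zb m .univ .univ s {v} {v'}
      za hcP
    have hzb := toReal_measure_treatment_mul_eq h1 hZ hC hV hM hY za zb m .univ .univ s {v} {v'}
      zb hcP
    apply mul_right_cancel₀ hc.ne'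
    linear_combination (P {ω | Z ω = zb ∧ C ω = c}).toReal * hza
      - (P {ω | Z ω = za ∧ C ω = c}).toReal * hzb
  have hjoint := transport {m}
  have hmarg := transport .univ
  simp only [Set.mem_univ, Set.mem_singleton_iff, true_and] at hjoint hmarg
  have hindep := toReal_measure_inter_mul_of_cProb_eq_mul hB''.ne' (h3 v' c hB' m v)
  simp only [← Set.ofPred_and, and_assoc] at hindep
  rw [cProb, div_mul_eq_mul_div, eq_div_iff hB''.ne', ← Set.ofPred_and]
  apply mul_right_cancel₀ hq.ne'
  linear_combination (P {ω | V zb ω = v' ∧ Z ω = zb ∧ C ω = c}).toReal * hjoint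
    + (P {ω | Z ω = za ∧ C ω = c}).toReal * hindep
    - (P {ω | M zb ω = m ∧ V zb ω = v' ∧ Z ω = zb ∧ C ω = c}).toReal * hmarg

lemma cProb_crossworld_mediator_eq_sum (h1 : IgnorableTreatment P Z C V M Y)
    {za zb : Bool} (h3 : CrossWorldIndependent P Z C V M za zb) (hZ : Measurable Z)
    (hC : Measurable C) (hV : ∀ zb, Measurable (V zb)) (hM : ∀ zb, Measurable (M zb))
    (hY : ∀ zb m, Measurable (Y zb m)) {v : 𝒱} {c : 𝒞}
    (hB' : ∀ v', 0 < P {ω | V zb ω = v' ∧ Z ω = zb ∧ C ω = c}) (m : ℳ) :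
    cProb P {ω | M zb ω = m} {ω | V za ω = v ∧ Z ω = za ∧ C ω = c}
      = ∑ v', cProb P {ω | M zb ω = m} {ω | V zb ω = v' ∧ Z ω = zb ∧ C ω = c}
          * cProb P {ω | V zb ω = v'} {ω | V za ω = v ∧ Z ω = za ∧ C ω = c} := by
  have := hM zb; have := hV za
  rw [cProb, toReal_measure_eq_sum_fiber (hV zb) (by measurability), Finset.sum_div]
  refine Finset.sum_congr rfl fun v' _ => ?_
  have hjoint : {ω | M zb ω = m} ∩ {ω | V za ω = v ∧ Z ω = za ∧ C ω = c} ∩ V zb ⁻¹' {v'}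
      = {ω | M zb ω = m ∧ V za ω = v ∧ V zb ω = v' ∧ Z ω = za ∧ C ω = c} := by
    ext ω
    simp only [Set.mem_inter_iff, Set.mem_ofPred_eq, Set.mem_preimage, Set.mem_singleton_iff]
    tauto
  have hmarg : {ω | V zb ω = v'} ∩ {ω | V za ω = v ∧ Z ω = za ∧ C ω = c}
      = {ω | V za ω = v ∧ V zb ω = v' ∧ Z ω = za ∧ C ω = c} := by
    ext ω
    simp only [Set.mem_inter_iff, Set.mem_ofPred_eq]
    tauto
  rw [hjoint, toReal_measure_crossworld_eq_cProb_mul h1 h3 hZ hC hV hM hY m (hB' v')]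
  unfold cProb
  rw [hmarg, mul_div_assoc]

lemma cExp_crossworld_eq_sum (h1 : IgnorableTreatment P Z C V M Y)
    (h2 : IgnorableMediator P Z C V M Y) (hZ : Measurable Z) (hC : Measurable C)
    (hV : ∀ zb, Measurable (V zb)) (hM : ∀ zb, Measurable (M zb))
    (hY : ∀ zb m, Measurable (Y zb m)) (za zb : Bool) (hYint : ∀ m, Integrable (Y za m) P)
    {v : 𝒱} {c : 𝒞} (hB : 0 < P {ω | V za ω = v ∧ Z ω = za ∧ C ω = c})
    (hD : ∀ m, 0 < P {ω | M za ω = m ∧ V za ω = v ∧ Z ω = za ∧ C ω = c}) :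
    cExp P (fun ω => Y za (M zb ω) ω) {ω | V za ω = v ∧ C ω = c}
      = ∑ m, cExp P (Y za m) {ω | M za ω = m ∧ V za ω = v ∧ Z ω = za ∧ C ω = c}
          * cProb P {ω | M zb ω = m} {ω | V za ω = v ∧ Z ω = za ∧ C ω = c} := by
  have := hM zb; have := hV za
  have hpiece : ∀ m, {ω | V za ω = v ∧ C ω = c} ∩ M zb ⁻¹' {m}
      = {ω | M zb ω = m ∧ V za ω = v ∧ C ω = c} := fun m => by
    ext ω
    simp only [Set.mem_inter_iff, Set.mem_ofPred_eq, Set.mem_preimage, Set.mem_singleton_iff]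
    tauto
  have hmediator_eq : ∀ m, Set.EqOn (Y za m) (fun ω => Y za (M zb ω) ω)
      {ω | M zb ω = m ∧ V za ω = v ∧ C ω = c} := fun m ω hω => by
    simp only [hω.1]
  have hpiece_meas : ∀ m, MeasurableSet {ω | M zb ω = m ∧ V za ω = v ∧ C ω = c} := fun m => by
    measurability
  rw [cExp, setIntegral_eq_sum_fiber (hM zb) (by measurability) fun m => by
      rw [hpiece]; exact (hYint m).integrableOn.congr_fun (hmediator_eq m) (hpiece_meas m),
    Finset.sum_div]
  refine Finset.sum_congr rfl fun m _ => ?_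
  rw [hpiece, ← setIntegral_congr_fun (hpiece_meas m) (hmediator_eq m),
    setIntegral_div_eq_of_treatment h1 hZ hC hV hM hY za zb m hB,
    setIntegral_div_eq_cExp_mul_cProb h2 hZ hC hV hM hY za zb m hB (hD m)]

end Treatment

section Consistency

variable {Ω 𝒱 ℳ 𝒞 : Type*} {Z : Ω → Bool} {C : Ω → 𝒞} {V : Bool → Ω → 𝒱} {M : Bool → Ω → ℳ}
  {Vobs : Ω → 𝒱} {Mobs : Ω → ℳ}

lemma setOf_observed_eq (hVc : ∀ ω, Vobs ω = V (Z ω) ω) (hMc : ∀ ω, Mobs ω = M (Z ω) ω)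
    (m : ℳ) (v : 𝒱) (zb : Bool) (c : 𝒞) :
    {ω | Mobs ω = m ∧ Vobs ω = v ∧ Z ω = zb ∧ C ω = c}
      = {ω | M zb ω = m ∧ V zb ω = v ∧ Z ω = zb ∧ C ω = c} := by
  ext ω
  by_cases hz : Z ω = zb <;> simp [hVc, hMc, hz]

variable [MeasurableSpace Ω] {P : Measure Ω}

lemma cProb_observed_eq (hVc : ∀ ω, Vobs ω = V (Z ω) ω) (hMc : ∀ ω, Mobs ω = M (Z ω) ω)
    (m : ℳ) (v : 𝒱) (zb : Bool) (c : 𝒞) :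
    cProb P {ω | Mobs ω = m} {ω | Vobs ω = v ∧ Z ω = zb ∧ C ω = c}
      = cProb P {ω | M zb ω = m} {ω | V zb ω = v ∧ Z ω = zb ∧ C ω = c} := by
  have hcond : {ω | Vobs ω = v ∧ Z ω = zb ∧ C ω = c} = {ω | V zb ω = v ∧ Z ω = zb ∧ C ω = c} := by
    ext ω
    by_cases hz : Z ω = zb <;> simp [hVc, hz]
  rw [cProb, cProb, ← Set.ofPred_and, ← Set.ofPred_and, setOf_observed_eq hVc hMc, hcond]

lemma cExp_observed_eq [MeasurableSpace 𝒱] [MeasurableSingletonClass 𝒱] [MeasurableSpace ℳ]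
    [MeasurableSingletonClass ℳ] [MeasurableSpace 𝒞] [MeasurableSingletonClass 𝒞]
    {Y : Bool → ℳ → Ω → ℝ} {Yobs : Ω → ℝ} (hZ : Measurable Z) (hC : Measurable C)
    (hV : ∀ zb, Measurable (V zb)) (hM : ∀ zb, Measurable (M zb))
    (hVc : ∀ ω, Vobs ω = V (Z ω) ω) (hMc : ∀ ω, Mobs ω = M (Z ω) ω)
    (hYc : ∀ ω, Yobs ω = Y (Z ω) (M (Z ω) ω) ω) (m : ℳ) (v : 𝒱) (zb : Bool) (c : 𝒞) :
    cExp P Yobs {ω | Mobs ω = m ∧ Vobs ω = v ∧ Z ω = zb ∧ C ω = c}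
      = cExp P (Y zb m) {ω | M zb ω = m ∧ V zb ω = v ∧ Z ω = zb ∧ C ω = c} := by
  have := hM zb; have := hV zb
  rw [cExp, cExp, setOf_observed_eq hVc hMc]
  congr 1
  exact setIntegral_congr_fun (by measurability) fun ω ⟨hm, _, hz, _⟩ => by rw [hYc, hz, hm]

end Consistency

theorem crossworld_mean_observed_data_identification_general
    {Ω 𝒱 ℳ 𝒞 : Type*} [MeasurableSpace Ω]
    [Fintype 𝒱] [MeasurableSpace 𝒱] [MeasurableSingletonClass 𝒱]
    [Fintype ℳ] [MeasurableSpace ℳ] [MeasurableSingletonClass ℳ]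
    [MeasurableSpace 𝒞] [MeasurableSingletonClass 𝒞]
    (P : Measure Ω) [IsProbabilityMeasure P]
    (Z : Ω → Bool) (C : Ω → 𝒞) (V : Bool → Ω → 𝒱) (M : Bool → Ω → ℳ)
    (Y : Bool → ℳ → Ω → ℝ)
    (Vobs : Ω → 𝒱) (Mobs : Ω → ℳ) (Yobs : Ω → ℝ)
    (hZ : Measurable Z) (hC : Measurable C)
    (hV : ∀ zb, Measurable (V zb)) (hM : ∀ zb, Measurable (M zb))
    (hYmeas : ∀ zb m, Measurable (Y zb m)) (hYint : ∀ zb m, Integrable (Y zb m) P)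
    -- consistency: `V = Z·V₁ + (1−Z)·V₀`, `M = Z·M₁ + (1−Z)·M₀`, `Y = Z·Y_{1,M₁} + (1−Z)·Y_{0,M₀}`
    (hVc : ∀ ω, Vobs ω = V (Z ω) ω)
    (hMc : ∀ ω, Mobs ω = M (Z ω) ω)
    (hYc : ∀ ω, Yobs ω = Y (Z ω) (M (Z ω) ω) ω)
    (z z' : Bool)
    -- Assumption (1): ignorable treatment assignment given baseline confounders
    (h1 : ∀ (za zb : Bool) (m : ℳ), ∀ A : Set ℝ, MeasurableSet A →
      ∀ (m₁ m₂ : ℳ) (v₁ v₂ : 𝒱) (z'' : Bool) (c : 𝒞),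
      0 < P {ω | C ω = c} →
      cProb P {ω | Y za m ω ∈ A ∧ M za ω = m₁ ∧ M zb ω = m₂ ∧ V za ω = v₁ ∧ V zb ω = v₂
                    ∧ Z ω = z''} {ω | C ω = c}
        = cProb P {ω | Y za m ω ∈ A ∧ M za ω = m₁ ∧ M zb ω = m₂ ∧ V za ω = v₁ ∧ V zb ω = v₂}
            {ω | C ω = c}
          * cProb P {ω | Z ω = z''} {ω | C ω = c})
    -- Assumption (2): ignorable mediator value assignment given baseline confounders
    -- and the post-treatment confounder
    (h2 : ∀ (za zb : Bool) (m : ℳ) (v₀ : 𝒱) (c : 𝒞),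
      0 < P {ω | V za ω = v₀ ∧ Z ω = za ∧ C ω = c} →
      ∀ A : Set ℝ, MeasurableSet A → ∀ (m₁ m₂ : ℳ),
      cProb P {ω | Y za m ω ∈ A ∧ M za ω = m₁ ∧ M zb ω = m₂}
          {ω | V za ω = v₀ ∧ Z ω = za ∧ C ω = c}
        = cProb P {ω | Y za m ω ∈ A} {ω | V za ω = v₀ ∧ Z ω = za ∧ C ω = c}
          * cProb P {ω | M za ω = m₁ ∧ M zb ω = m₂} {ω | V za ω = v₀ ∧ Z ω = za ∧ C ω = c})
    -- Assumption (3): conditional cross-world independence of `V_z` and `M_{z'}`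
    (h3 : ∀ (v' : 𝒱) (c : 𝒞),
      0 < P {ω | V z' ω = v' ∧ Z ω = z' ∧ C ω = c} →
      ∀ (m' : ℳ) (v : 𝒱),
      cProb P {ω | M z' ω = m' ∧ V z ω = v} {ω | V z' ω = v' ∧ Z ω = z' ∧ C ω = c}
        = cProb P {ω | M z' ω = m'} {ω | V z' ω = v' ∧ Z ω = z' ∧ C ω = c}
          * cProb P {ω | V z ω = v} {ω | V z' ω = v' ∧ Z ω = z' ∧ C ω = c})
    (v : 𝒱) (c : 𝒞)
    (hpos : 0 < P {ω | V z ω = v ∧ Z ω = z ∧ C ω = c})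
    (hpos' : ∀ v' : 𝒱, 0 < P {ω | V z' ω = v' ∧ Z ω = z' ∧ C ω = c})
    (hposM : ∀ m' : ℳ, 0 < P {ω | Mobs ω = m' ∧ Vobs ω = v ∧ Z ω = z ∧ C ω = c}) :
    cExp P (fun ω => Y z (M z' ω) ω) {ω | V z ω = v ∧ C ω = c}
      = ∑ v' : 𝒱, ∑ m' : ℳ,
          cExp P Yobs {ω | Mobs ω = m' ∧ Vobs ω = v ∧ Z ω = z ∧ C ω = c}
            * cProb P {ω | Mobs ω = m'} {ω | Vobs ω = v' ∧ Z ω = z' ∧ C ω = c}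
            * cProb P {ω | V z' ω = v'} {ω | V z ω = v ∧ Z ω = z ∧ C ω = c} := by
  have hD : ∀ m', 0 < P {ω | M z ω = m' ∧ V z ω = v ∧ Z ω = z ∧ C ω = c} := fun m' => by
    simpa only [setOf_observed_eq hVc hMc] using hposM m'
  rw [cExp_crossworld_eq_sum h1 h2 hZ hC hV hM hYmeas z z' (hYint z) hpos hD]
  simp_rw [cProb_crossworld_mediator_eq_sum h1 h3 hZ hC hV hM hYmeas hpos', Finset.mul_sum]
  rw [Finset.sum_comm]
  refine Finset.sum_congr rfl fun v' _ => Finset.sum_congr rfl fun m' _ => ?_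
  rw [cExp_observed_eq hZ hC hV hM hVc hMc hYc, cProb_observed_eq hVc hMc, mul_assoc]

/-- Observed-data identification of the cross-world mean: under Assumptions (1), (2), (3) and
the consistency relations `V = V_Z`, `M = M_Z`, `Y = Y_{Z, M_Z}`, the cross-world mean
`E[Y_{z, M_{z'}} | V_z = v, C = c]` equals a functional of the joint distribution of the
observed data `(Y, M, V, Z, C)` together with the cross-world conditional probability
`P(V_{z'} = v' | V_z = v, Z = z, C = c)`. -/
theorem crossworld_mean_observed_data_identification
    {Ω 𝒱 ℳ 𝒞 : Type*} [MeasurableSpace Ω]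
    [Fintype 𝒱] [MeasurableSpace 𝒱] [MeasurableSingletonClass 𝒱]
    [Fintype ℳ] [MeasurableSpace ℳ] [MeasurableSingletonClass ℳ]
    [Fintype 𝒞] [MeasurableSpace 𝒞] [MeasurableSingletonClass 𝒞]
    (P : Measure Ω) [IsProbabilityMeasure P]
    (Z : Ω → Bool) (C : Ω → 𝒞) (V : Bool → Ω → 𝒱) (M : Bool → Ω → ℳ)
    (Y : Bool → ℳ → Ω → ℝ)
    (Vobs : Ω → 𝒱) (Mobs : Ω → ℳ) (Yobs : Ω → ℝ)
    (hZ : Measurable Z) (hC : Measurable C)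
    (hV : ∀ zb, Measurable (V zb)) (hM : ∀ zb, Measurable (M zb))
    (hYmeas : ∀ zb m, Measurable (Y zb m)) (hYint : ∀ zb m, Integrable (Y zb m) P)
    -- consistency: `V = Z·V₁ + (1−Z)·V₀`, `M = Z·M₁ + (1−Z)·M₀`, `Y = Z·Y_{1,M₁} + (1−Z)·Y_{0,M₀}`
    (hVc : ∀ ω, Vobs ω = V (Z ω) ω)
    (hMc : ∀ ω, Mobs ω = M (Z ω) ω)
    (hYc : ∀ ω, Yobs ω = Y (Z ω) (M (Z ω) ω) ω)
    (z z' : Bool) (hzz' : z ≠ z')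
    -- Assumption (1): ignorable treatment assignment given baseline confounders
    (h1 : ∀ (za zb : Bool) (m : ℳ), ∀ A : Set ℝ, MeasurableSet A →
      ∀ (m₁ m₂ : ℳ) (v₁ v₂ : 𝒱) (z'' : Bool) (c : 𝒞),
      0 < P {ω | C ω = c} →
      cProb P {ω | Y za m ω ∈ A ∧ M za ω = m₁ ∧ M zb ω = m₂ ∧ V za ω = v₁ ∧ V zb ω = v₂
                    ∧ Z ω = z''} {ω | C ω = c}
        = cProb P {ω | Y za m ω ∈ A ∧ M za ω = m₁ ∧ M zb ω = m₂ ∧ V za ω = v₁ ∧ V zb ω = v₂}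
            {ω | C ω = c}
          * cProb P {ω | Z ω = z''} {ω | C ω = c})
    -- Assumption (2): ignorable mediator value assignment given baseline confounders
    -- and the post-treatment confounder
    (h2 : ∀ (za zb : Bool) (m : ℳ) (v₀ : 𝒱) (c : 𝒞),
      0 < P {ω | V za ω = v₀ ∧ Z ω = za ∧ C ω = c} →
      ∀ A : Set ℝ, MeasurableSet A → ∀ (m₁ m₂ : ℳ),
      cProb P {ω | Y za m ω ∈ A ∧ M za ω = m₁ ∧ M zb ω = m₂}
          {ω | V za ω = v₀ ∧ Z ω = za ∧ C ω = c}
        = cProb P {ω | Y za m ω ∈ A} {ω | V za ω = v₀ ∧ Z ω = za ∧ C ω = c}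
          * cProb P {ω | M za ω = m₁ ∧ M zb ω = m₂} {ω | V za ω = v₀ ∧ Z ω = za ∧ C ω = c})
    -- Assumption (3): conditional cross-world independence of `V_z` and `M_{z'}`
    (h3 : ∀ (v' : 𝒱) (c : 𝒞),
      0 < P {ω | V z' ω = v' ∧ Z ω = z' ∧ C ω = c} →
      ∀ (m' : ℳ) (v : 𝒱),
      cProb P {ω | M z' ω = m' ∧ V z ω = v} {ω | V z' ω = v' ∧ Z ω = z' ∧ C ω = c}
        = cProb P {ω | M z' ω = m'} {ω | V z' ω = v' ∧ Z ω = z' ∧ C ω = c}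
          * cProb P {ω | V z ω = v} {ω | V z' ω = v' ∧ Z ω = z' ∧ C ω = c})
    (v : 𝒱) (c : 𝒞)
    (hpos : 0 < P {ω | V z ω = v ∧ Z ω = z ∧ C ω = c})
    (hpos' : ∀ v' : 𝒱, 0 < P {ω | V z' ω = v' ∧ Z ω = z' ∧ C ω = c})
    (hposM : ∀ m' : ℳ, 0 < P {ω | Mobs ω = m' ∧ Vobs ω = v ∧ Z ω = z ∧ C ω = c})
    (hposM' : ∀ (m' : ℳ) (v' : 𝒱),
      0 < P {ω | Mobs ω = m' ∧ Vobs ω = v' ∧ Z ω = z' ∧ C ω = c}) :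
    cExp P (fun ω => Y z (M z' ω) ω) {ω | V z ω = v ∧ C ω = c}
      = ∑ v' : 𝒱, ∑ m' : ℳ,
          cExp P Yobs {ω | Mobs ω = m' ∧ Vobs ω = v ∧ Z ω = z ∧ C ω = c}
            * cProb P {ω | Mobs ω = m'} {ω | Vobs ω = v' ∧ Z ω = z' ∧ C ω = c}
            * cProb P {ω | V z' ω = v'} {ω | V z ω = v ∧ Z ω = z ∧ C ω = c} :=
  crossworld_mean_observed_data_identification_general P Z C V M Y Vobs Mobs Yobs hZ hC hV hM hYmeas
    hYint hVc hMc hYc z z' h1 h2 h3 v c hpos hpos' hposM
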